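/- Let (R, m, k) be a Noetherian local ring of prime characteristic p > 0 and M a finitely generated R-module. Then there exists a positive constant C such that for all e ∈ ℕ and every ideal I of R containing m^[p^e] (the ideal generated by p^e-th powers of elements of m), the length of (R/I) ⊗_R M is at most C·p^(e·dim M). -/

import Mathlib

set_option linter.unusedVariables false

open Filter IsLocalRing

/-- `I^[q]` : the ideal generated by the `q`-th powers of the elements of `I`. -/
def Ideal.bracketPow {R : Type*} [CommSemiring R] (I : Ideal R) (q : ℕ) : Ideal R :=
  Ideal.span ((fun x => x ^ q) '' (I : Set R))

/-- The length of the `R`-module `M` (as a natural number; junk value when infinite),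
computed as the Krull dimension of the lattice of submodules of `M`. -/
noncomputable def mlength (R M : Type*) [Ring R] [AddCommGroup M] [Module R M] : ℕ :=
  (WithBot.unbotD 0 (Order.krullDim (Submodule R M))).toNat

/-- The length of `(R ⧸ I) ⊗_R M`. -/
noncomputable def lenTensor (R : Type*) [CommRing R] (M : Type*) [AddCommGroup M] [Module R M]
    (I : Ideal R) : ℕ :=
  mlength R (TensorProduct R (R ⧸ I) M)

/-- Type synonym: `M` viewed as an `R`-module via the `e`-th iterate of Frobenius,
i.e. `F^e_* M`. -/
def FrobMod (R : Type*) (p e : ℕ) (M : Type*) : Type _ := M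

/-- `F^e_* m`, the element of `F^e_* M` corresponding to `m : M`. -/
def FrobMod.of (R : Type*) (p e : ℕ) {M : Type*} (m : M) : FrobMod R p e M := m

instance FrobMod.instAddCommGroup {R M : Type*} {p e : ℕ} [AddCommGroup M] :
    AddCommGroup (FrobMod R p e M) := inferInstanceAs (AddCommGroup M)

noncomputable instance FrobMod.instModule {R : Type*} [CommSemiring R] {p e : ℕ} [ExpChar R p]
    {M : Type*} [AddCommGroup M] [Module R M] : Module R (FrobMod R p e M) :=
  Module.compHom M (iterateFrobenius R p e)

/-- `M` has a free direct summand (isomorphic to `R`). -/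
def HasFreeDirectSummand (R M : Type*) [CommRing R] [AddCommGroup M] [Module R M] : Prop :=
  ∃ N N' : Submodule R M, IsCompl N N' ∧ Nonempty (N ≃ₗ[R] R)

/-- `R` is `F`-finite: the Frobenius endomorphism is a finite ring homomorphism,
i.e. `F_* R` is a finitely generated `R`-module. -/
def FFinite (R : Type*) [CommRing R] (p : ℕ) [ExpChar R p] : Prop :=
  RingHom.Finite (frobenius R p)

/-- The set `I_e = { r : R | φ (F^e_* r) ∈ 𝔪 for all φ ∈ Hom_R (F^e_* R, R) }`. -/
def splittingSet (R : Type*) [CommRing R] [IsLocalRing R] (p e : ℕ) [ExpChar R p] : Set R :=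
  {r : R | ∀ φ : FrobMod R p e R →ₗ[R] R, φ (FrobMod.of R p e r) ∈ maximalIdeal R}

/-- `α = α(R) = log_p [k : k^p]`, encoded as `[k^{1/p} : k] = p ^ α` for the residue field `k`. -/
def IsAlphaOf (R : Type*) [CommRing R] [IsLocalRing R] (p : ℕ)
    [ExpChar (ResidueField R) p] (α : ℕ) : Prop :=
  Module.finrank (ResidueField R) (FrobMod (ResidueField R) p 1 (ResidueField R)) = p ^ α

/-- `b` records, for each `e`, a direct sum decomposition `F^e_* M ≅ R^{b e} ⊕ N_e`
where `N_e` has no free direct summand; i.e. `b e` is the `e`-th Frobenius splitting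
number of `M`. -/
def IsFrobSplittingNumbersOf (R : Type*) [CommRing R] (p : ℕ) [ExpChar R p]
    (M : Type*) [AddCommGroup M] [Module R M] (b : ℕ → ℕ) : Prop :=
  ∀ e : ℕ, ∃ Fe Ne : Submodule R (FrobMod R p e M),
    IsCompl Fe Ne ∧ Nonempty (Fe ≃ₗ[R] (Fin (b e) → R)) ∧ ¬ HasFreeDirectSummand R Ne

/-- `a e` is the `e`-th Frobenius splitting number of `R`:
`F^e_* R ≅ R^{a e} ⊕ M_e` with `M_e` having no free direct summand. -/
def IsFrobSplittingNumbers (R : Type*) [CommRing R] (p : ℕ) [ExpChar R p] (a : ℕ → ℕ) : Prop :=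
  IsFrobSplittingNumbersOf R p R a

/-- A local ring is regular if its maximal ideal is generated by `dim R` elements. -/
def RegularLocal (R : Type*) [CommRing R] [IsLocalRing R] : Prop :=
  ∃ s : Finset R, Ideal.span (s : Set R) = maximalIdeal R ∧
    (s.card : WithBot (WithTop ℕ)) = ringKrullDim R

/-- A local ring is Cohen–Macaulay if there is a regular sequence in the maximal ideal
of length `dim R`. -/
def CohenMacaulayLocal (R : Type*) [CommRing R] [IsLocalRing R] : Prop :=
  ∃ rs : List R, (∀ r ∈ rs, r ∈ maximalIdeal R) ∧ RingTheory.Sequence.IsRegular R rs ∧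
    (rs.length : WithBot (WithTop ℕ)) = ringKrullDim R

/-- `R` is strongly `F`-regular: for every `c` not in any minimal prime there are `e`
and `φ : F^e_* R → R` with `φ (F^e_* c) = 1`. -/
def StronglyFRegular (R : Type*) [CommRing R] (p : ℕ) [ExpChar R p] : Prop :=
  ∀ c : R, (∀ P ∈ minimalPrimes R, c ∉ P) →
    ∃ (e : ℕ) (φ : FrobMod R p e R →ₗ[R] R), φ (FrobMod.of R p e c) = 1

/-!
Pick a system of parameters for `M`: elements `x₁, …, x_d ∈ 𝔪`, `d = dim M`, with `M / (x) M`
of finite length; they exist by Krull's height theorem applied in `R ⧸ ann M`. Since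
`𝔪^[q]` contains `x₁^q, …, x_d^q`, the length of `M / I M` is at most that of `M / (x^q) M`.
Replacing one parameter `x` by `x^q` multiplies the length by at most `q`, because
`M / (x^q) M` is filtered by the images of multiplication by `x^k`, `k < q`, each a quotient
of `M / x M`. Hence `length (M / I M) ≤ q^d · length (M / (x) M)`.
-/

open Pointwise

lemma mlength_eq_toNat_length {A N : Type*} [Ring A] [AddCommGroup N] [Module A N] :
    mlength A N = (Module.length A N).toNat := by
  rw [mlength, ← Module.coe_length, WithBot.unbotD_coe]

section Length

variable {R M : Type*} [Ring R] [AddCommGroup M] [Module R M]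

lemma Module.length_le_add_of_exact {N P : Type*} [AddCommGroup N] [Module R N]
    [AddCommGroup P] [Module R P] (f : N →ₗ[R] M) (g : M →ₗ[R] P)
    (hg : Function.Surjective g) (H : Function.Exact f g) :
    Module.length R M ≤ Module.length R N + Module.length R P := by
  rw [Module.length_eq_add_of_exact (LinearMap.range f).subtype g (Submodule.subtype_injective _)
    hg (by rw [LinearMap.exact_iff, Submodule.range_subtype]; exact LinearMap.exact_iff.mp H)]
  gcongr
  exact Module.length_le_of_surjective f.rangeRestrict f.surjective_rangeRestrict

lemma Module.length_quotient_le_of_le {S T : Submodule R M} (h : S ≤ T) :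
    Module.length R (M ⧸ T) ≤ Module.length R (M ⧸ S) :=
  Module.length_le_of_surjective _ (Submodule.factor_surjective h)

end Length

section LengthQuotientSMul

variable {R M : Type*} [CommRing R] [AddCommGroup M] [Module R M]

lemma Module.length_quotient_pow_succ_smul_sup_le (x : R) (n : ℕ) (K : Submodule R M) :
    Module.length R (M ⧸ (x ^ (n + 1) • ⊤ ⊔ K)) ≤
      Module.length R (M ⧸ (x ^ n • ⊤ ⊔ K)) + Module.length R (M ⧸ (x • ⊤ ⊔ K)) := by
  have hpow (m : M) : x ^ n • x • m ∈ x ^ (n + 1) • (⊤ : Submodule R M) := by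
    rw [← mul_smul, ← pow_succ]
    exact Submodule.smul_mem_pointwise_smul _ _ _ trivial
  have hST : x ^ (n + 1) • ⊤ ⊔ K ≤ x ^ n • ⊤ ⊔ K := by
    refine sup_le_sup_right ?_ K
    rintro _ ⟨m, -, rfl⟩
    rw [DistribSMul.toLinearMap_apply, pow_succ, mul_smul]
    exact Submodule.smul_mem_pointwise_smul _ _ _ trivial
  have hmul : x • ⊤ ⊔ K ≤ (x ^ (n + 1) • ⊤ ⊔ K).comap (LinearMap.lsmul R M (x ^ n)) := by
    refine sup_le ?_ fun k hk => Submodule.mem_sup_right (K.smul_mem _ hk)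
    rintro _ ⟨m, -, rfl⟩
    exact Submodule.mem_sup_left (hpow m)
  have hexact : Function.Exact ((x • ⊤ ⊔ K).mapQ _ _ hmul) (Submodule.factor hST) := by
    intro y
    obtain ⟨m, rfl⟩ := Submodule.mkQ_surjective _ y
    rw [Submodule.factor_mk, Submodule.mkQ_apply, Submodule.Quotient.mk_eq_zero]
    constructor
    · intro hm
      obtain ⟨_, ⟨a, -, rfl⟩, k, hk, rfl⟩ := Submodule.mem_sup.mp hm
      refine ⟨Submodule.Quotient.mk a, ?_⟩
      rw [Submodule.mapQ_apply, Submodule.mkQ_apply, Submodule.Quotient.eq]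
      simpa using Submodule.neg_mem _ (Submodule.mem_sup_right hk)
    · rintro ⟨y, hy⟩
      obtain ⟨a, rfl⟩ := Submodule.Quotient.mk_surjective _ y
      rw [Submodule.mapQ_apply, Submodule.mkQ_apply, Submodule.Quotient.eq] at hy
      have ha : x ^ n • a ∈ x ^ n • ⊤ ⊔ K :=
        Submodule.mem_sup_left (Submodule.smul_mem_pointwise_smul _ _ _ trivial)
      simpa using Submodule.sub_mem _ ha (hST hy)
  calc Module.length R (M ⧸ (x ^ (n + 1) • ⊤ ⊔ K))
      ≤ Module.length R (M ⧸ (x • ⊤ ⊔ K)) + Module.length R (M ⧸ (x ^ n • ⊤ ⊔ K)) :=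
        Module.length_le_add_of_exact _ _ (Submodule.factor_surjective hST) hexact
    _ = _ := add_comm _ _

lemma Module.length_quotient_pow_smul_sup_le (x : R) (n : ℕ) (K : Submodule R M) :
    Module.length R (M ⧸ (x ^ n • ⊤ ⊔ K)) ≤ n * Module.length R (M ⧸ (x • ⊤ ⊔ K)) := by
  induction n with
  | zero => simp [Module.length_eq_zero]
  | succ n ih =>
    calc Module.length R (M ⧸ (x ^ (n + 1) • ⊤ ⊔ K))
        ≤ Module.length R (M ⧸ (x ^ n • ⊤ ⊔ K)) + Module.length R (M ⧸ (x • ⊤ ⊔ K)) :=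
          Module.length_quotient_pow_succ_smul_sup_le x n K
      _ ≤ n * Module.length R (M ⧸ (x • ⊤ ⊔ K)) + Module.length R (M ⧸ (x • ⊤ ⊔ K)) := by
          gcongr
      _ = (n + 1 : ℕ) * Module.length R (M ⧸ (x • ⊤ ⊔ K)) := by push_cast; ring

lemma Module.length_quotient_span_image_pow_smul_sup_le (s : Finset R) (q : ℕ)
    (K : Submodule R M) :
    Module.length R (M ⧸ (Ideal.span ((· ^ q) '' (s : Set R)) • ⊤ ⊔ K)) ≤
      q ^ s.card * Module.length R (M ⧸ (Ideal.span (s : Set R) • ⊤ ⊔ K)) := by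
  classical
  induction s using Finset.induction_on generalizing K with
  | empty =>
    rw [Finset.coe_empty, Set.image_empty, Finset.card_empty, pow_zero, one_mul]
  | insert a s ha ih =>
    have hspan (t : Set R) (y : R) : Ideal.span (insert y t) • ⊤ ⊔ K =
        y • ⊤ ⊔ (Ideal.span t • ⊤ ⊔ K : Submodule R M) := by
      rw [Ideal.span_insert, Submodule.sup_smul, Submodule.ideal_span_singleton_smul, sup_assoc]
    rw [Finset.coe_insert, Set.image_insert_eq, hspan, hspan, Finset.card_insert_of_notMem ha,
      pow_succ', mul_assoc]
    calc _ ≤ q * Module.length R (M ⧸ (a • ⊤ ⊔ (Ideal.span ((· ^ q) '' (s : Set R)) • ⊤ ⊔ K))) :=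
          Module.length_quotient_pow_smul_sup_le a q _
      _ ≤ _ := by
          gcongr
          have := ih (a • ⊤ ⊔ K)
          rwa [sup_left_comm, sup_left_comm (Ideal.span (s : Set R) • ⊤)] at this

lemma Module.length_quotient_smul_top_le_of_bracketPow_le {𝔞 I : Ideal R} {t : Finset R}
    (ht : (t : Set R) ⊆ 𝔞) {q : ℕ} (hI : 𝔞.bracketPow q ≤ I) :
    Module.length R (M ⧸ I • (⊤ : Submodule R M)) ≤
      q ^ t.card * Module.length R (M ⧸ Ideal.span (t : Set R) • (⊤ : Submodule R M)) := by
  calc Module.length R (M ⧸ I • (⊤ : Submodule R M))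
      ≤ Module.length R (M ⧸ Ideal.span ((· ^ q) '' (t : Set R)) • (⊤ : Submodule R M)) :=
        Module.length_quotient_le_of_le <| Submodule.smul_mono_left <|
          (Ideal.span_mono (Set.image_mono ht)).trans hI
    _ ≤ _ := by
        have := Module.length_quotient_span_image_pow_smul_sup_le (M := M) t q ⊥
        rwa [sup_bot_eq, sup_bot_eq] at this

end LengthQuotientSMul

section SystemOfParameters

variable {R : Type*} [CommRing R] [IsNoetherianRing R] [IsLocalRing R]

lemma IsLocalRing.exists_finset_card_eq_ringKrullDim (A : Type*) [CommRing A]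
    [IsNoetherianRing A] [IsLocalRing A] :
    ∃ s : Finset A, maximalIdeal A ∈ (Ideal.span (s : Set A)).minimalPrimes ∧
      (s.card : WithBot ℕ∞) = ringKrullDim A := by
  obtain ⟨s, hs, hcard⟩ := (maximalIdeal A).exists_finset_card_eq_height_of_isNoetherianRing
  exact ⟨s, hs, by rw [← maximalIdeal_height_eq_ringKrullDim, ← hcard]; rfl⟩

lemma exists_finset_card_le_mem_minimalPrimes_span_sup (J : Ideal R) (hJ : J ≠ ⊤) :
    ∃ t : Finset R, (t.card : WithBot ℕ∞) ≤ ringKrullDim (R ⧸ J) ∧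
      maximalIdeal R ∈ (Ideal.span (t : Set R) ⊔ J).minimalPrimes := by
  classical
  have : Nontrivial (R ⧸ J) := Ideal.Quotient.nontrivial_iff.mpr hJ
  have : IsLocalRing (R ⧸ J) := .of_surjective' _ Ideal.Quotient.mk_surjective
  obtain ⟨s, hs, hcard⟩ := IsLocalRing.exists_finset_card_eq_ringKrullDim (R ⧸ J)
  let lift := Function.surjInv (Ideal.Quotient.mk_surjective (I := J))
  refine ⟨s.image lift, hcard ▸ by exact_mod_cast Finset.card_image_le, ?_⟩
  have hspan : Ideal.span (s : Set (R ⧸ J)) =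
      (Ideal.span (s.image lift : Set R)).map (Ideal.Quotient.mk J) := by
    rw [Ideal.map_span, Finset.coe_image, Set.image_image]
    simp [lift, Function.surjInv_eq]
  have hmax : (maximalIdeal (R ⧸ J)).comap (Ideal.Quotient.mk J) = maximalIdeal R :=
    IsLocalRing.eq_maximalIdeal (Ideal.comap_isMaximal_of_surjective _ Ideal.Quotient.mk_surjective)
  have := Ideal.minimalPrimes_comap_of_surjective Ideal.Quotient.mk_surjective hs
  rwa [hmax, hspan, Ideal.comap_map_of_surjective' _ Ideal.Quotient.mk_surjective,
    Ideal.mk_ker] at this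

lemma isFiniteLength_quotient_smul_top_of_mem_minimalPrimes {M : Type*} [AddCommGroup M]
    [Module R M] [Module.Finite R M] {I : Ideal R} (h : maximalIdeal R ∈ I.minimalPrimes) :
    IsFiniteLength R (M ⧸ I • (⊤ : Submodule R M)) := by
  have := IsLocalRing.quotient_artinian_of_mem_minimalPrimes_of_isLocalRing I h
  have : Module.Finite (R ⧸ I) (M ⧸ I • (⊤ : Submodule R M)) :=
    Module.Finite.of_restrictScalars_finite R _ _
  have : IsArtinian R (M ⧸ I • (⊤ : Submodule R M)) :=
    isArtinian_of_surjective_algebraMap (R := R ⧸ I) Ideal.Quotient.mk_surjective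
  exact isFiniteLength_iff_isNoetherian_isArtinian.mpr ⟨inferInstance, inferInstance⟩

theorem Module.exists_finset_card_le_isFiniteLength_quotient (M : Type*) [AddCommGroup M]
    [Module R M] [Module.Finite R M] {d : ℕ}
    (hd : ringKrullDim (R ⧸ Module.annihilator R M) = d) :
    ∃ t : Finset R, (t : Set R) ⊆ maximalIdeal R ∧ t.card ≤ d ∧
      IsFiniteLength R (M ⧸ Ideal.span (t : Set R) • (⊤ : Submodule R M)) := by
  have : Nontrivial (R ⧸ Module.annihilator R M) := by
    by_contra h
    rw [not_nontrivial_iff_subsingleton] at h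
    rw [ringKrullDim_eq_bot_of_subsingleton] at hd
    exact WithBot.bot_ne_coe hd
  obtain ⟨t, hcard, hmin⟩ := exists_finset_card_le_mem_minimalPrimes_span_sup
    (Module.annihilator R M) (Ideal.Quotient.nontrivial_iff.mp this)
  refine ⟨t, fun x hx => hmin.1.2 (Submodule.mem_sup_left (Ideal.subset_span hx)),
    by exact_mod_cast hd ▸ hcard, ?_⟩
  have := isFiniteLength_quotient_smul_top_of_mem_minimalPrimes (M := M) hmin
  rwa [Submodule.sup_smul, ← Submodule.annihilator_top, Submodule.annihilator_smul,
    sup_bot_eq] at this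

end SystemOfParameters

theorem statement0_general {R : Type*} [CommRing R] [IsNoetherianRing R] [IsLocalRing R]
    {p : ℕ} [Fact p.Prime]
    (M : Type*) [AddCommGroup M] [Module R M] [Module.Finite R M]
    (dM : ℕ) (hdM : ringKrullDim (R ⧸ Module.annihilator R M) = dM) :
    ∃ C : ℝ, 0 < C ∧ ∀ (e : ℕ) (I : Ideal R),
      (maximalIdeal R).bracketPow (p ^ e) ≤ I →
      (lenTensor R M I : ℝ) ≤ C * (p : ℝ) ^ (e * dM) := by
  obtain ⟨t, htm, hcard, hfin⟩ := Module.exists_finset_card_le_isFiniteLength_quotient M hdM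
  set c := Module.length R (M ⧸ Ideal.span (t : Set R) • (⊤ : Submodule R M))
  have hc : c = c.toNat := (ENat.natCast_toNat (Module.length_ne_top_iff.mpr hfin)).symm
  have hp : 1 ≤ p := (Fact.out : p.Prime).one_le
  refine ⟨c.toNat + 1, by positivity, fun e I hI => ?_⟩
  have hlen : lenTensor R M I ≤ (p ^ e) ^ dM * c.toNat := by
    rw [lenTensor, mlength_eq_toNat_length, (TensorProduct.quotTensorEquivQuotSMul M I).length_eq]
    refine ENat.toNat_le_of_le_natCast ?_
    calc _ ≤ ((p ^ e : ℕ) : ℕ∞) ^ t.card * c :=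
          Module.length_quotient_smul_top_le_of_bracketPow_le htm hI
      _ ≤ ((p ^ e : ℕ) : ℕ∞) ^ dM * c := by
          gcongr
          exact_mod_cast Nat.one_le_pow _ _ hp
      _ = _ := by push_cast; rw [← hc]
  calc (lenTensor R M I : ℝ) ≤ ((p ^ e) ^ dM * c.toNat : ℕ) := by exact_mod_cast hlen
    _ ≤ (c.toNat + 1) * (p : ℝ) ^ (e * dM) := by
        push_cast
        rw [← pow_mul, mul_comm]
        gcongr
        linarith

/-- uniform bound `length((R/I) ⊗ M) ≤ C p^{e dim M}` for all `I ⊇ 𝔪^{[p^e]}`. -/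
theorem statement0 {R : Type*} [CommRing R] [IsNoetherianRing R] [IsLocalRing R]
    {p : ℕ} [Fact p.Prime] [CharP R p]
    (M : Type*) [AddCommGroup M] [Module R M] [Module.Finite R M]
    (dM : ℕ) (hdM : ringKrullDim (R ⧸ Module.annihilator R M) = dM) :
    ∃ C : ℝ, 0 < C ∧ ∀ (e : ℕ) (I : Ideal R),
      (maximalIdeal R).bracketPow (p ^ e) ≤ I →
      (lenTensor R M I : ℝ) ≤ C * (p : ℝ) ^ (e * dM) :=
  statement0_general M dM hdM
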